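/- arXiv:2503.13230 — 6 statements merged into one kernel-verified Lean document; each statement's English description precedes it below -/
import Mathlib

section
/- For 0 < a < 1/3, the map G: ℝ² → ℝ² defined by G(x,y) = (x + 2a sin x + a sin y + a sin(x−y), y + a sin x + 2a sin y + a sin(y−x)) is injective. -/
open Real

theorem stmt_3 (a : ℝ) (ha : 0 < a) (ha' : a < 1 / 3) :
    Function.Injective (fun p : ℝ × ℝ =>
      (p.1 + 2 * a * Real.sin p.1 + a * Real.sin p.2 + a * Real.sin (p.1 - p.2),
       p.2 + a * Real.sin p.1 + 2 * a * Real.sin p.2 + a * Real.sin (p.2 - p.1))) := by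
  have hsin : ∀ u v : ℝ, |Real.sin u - Real.sin v| ≤ |u - v| := by
    intro u v
    rw [Real.sin_sub_sin, abs_mul, abs_mul, abs_two]
    have h1 : |Real.sin ((u - v) / 2)| ≤ |(u - v) / 2| := Real.abs_sin_le_abs
    have h2 : |Real.cos ((u + v) / 2)| ≤ 1 := Real.abs_cos_le_one _
    have h3 : |(u - v) / 2| = |u - v| / 2 := by rw [abs_div, abs_two]
    nlinarith [abs_nonneg (Real.sin ((u - v) / 2)), abs_nonneg (Real.cos ((u + v) / 2))]
  intro p q h
  simp only [Prod.mk.injEq] at h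
  obtain ⟨e1, e2⟩ := h
  set P := p.1 - q.1 with hP
  set Q := p.2 - q.2 with hQ
  set d1 := Real.sin q.1 - Real.sin p.1 with hd1
  set d2 := Real.sin q.2 - Real.sin p.2 with hd2
  set d3 := Real.sin (q.1 - q.2) - Real.sin (p.1 - p.2) with hd3
  have hneg1 : Real.sin (p.2 - p.1) = -Real.sin (p.1 - p.2) := by
    rw [← neg_sub, Real.sin_neg]
  have hneg2 : Real.sin (q.2 - q.1) = -Real.sin (q.1 - q.2) := by
    rw [← neg_sub, Real.sin_neg]
  have hsumeq : P + Q = 3 * a * d1 + 3 * a * d2 := by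
    rw [hP, hQ, hd1, hd2]; linear_combination e1 + e2 - a * hneg1 + a * hneg2
  have hdiffeq : P - Q = a * d1 - a * d2 + 2 * a * d3 := by
    rw [hP, hQ, hd1, hd2, hd3]; linear_combination e1 - e2 + a * hneg1 - a * hneg2
  have hs1 : |d1| ≤ |P| := by
    rw [hd1, hP, abs_sub_comm p.1 q.1]; exact hsin q.1 p.1
  have hs2 : |d2| ≤ |Q| := by
    rw [hd2, hQ, abs_sub_comm p.2 q.2]; exact hsin q.2 p.2
  have hs3 : |d3| ≤ |P - Q| := by
    rw [hd3, hP, hQ]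
    calc |Real.sin (q.1 - q.2) - Real.sin (p.1 - p.2)|
        ≤ |(q.1 - q.2) - (p.1 - p.2)| := hsin _ _
      _ = |p.1 - q.1 - (p.2 - q.2)| := by rw [abs_sub_comm]; congr 1; ring
  have u1 : d1 ≤ |P| := (le_abs_self _).trans hs1
  have l1 : -|P| ≤ d1 := le_trans (neg_le_neg hs1) (neg_abs_le d1)
  have u2 : d2 ≤ |Q| := (le_abs_self _).trans hs2
  have l2 : -|Q| ≤ d2 := le_trans (neg_le_neg hs2) (neg_abs_le d2)
  have u3 : d3 ≤ |P - Q| := (le_abs_self _).trans hs3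
  have l3 : -|P - Q| ≤ d3 := le_trans (neg_le_neg hs3) (neg_abs_le d3)
  have m1u := mul_le_mul_of_nonneg_left u1 ha.le
  have m1l := mul_le_mul_of_nonneg_left l1 ha.le
  have m2u := mul_le_mul_of_nonneg_left u2 ha.le
  have m2l := mul_le_mul_of_nonneg_left l2 ha.le
  have m3u := mul_le_mul_of_nonneg_left u3 ha.le
  have m3l := mul_le_mul_of_nonneg_left l3 ha.le
  have hsum : |P + Q| ≤ 3 * a * (|P| + |Q|) := by
    rw [abs_le]; constructor <;> linarith
  have hdiff : |P - Q| ≤ a * |P| + a * |Q| + 2 * a * |P - Q| := by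
    rw [abs_le]; constructor <;> linarith
  have hd : (1 - 2 * a) * |P - Q| ≤ a * (|P| + |Q|) := by linarith
  have h2a : (0:ℝ) < 1 - 2 * a := by linarith
  have hdiff3 : |P - Q| ≤ 3 * a * (|P| + |Q|) := by
    have hmul : (1 - 2 * a) * |P - Q| ≤ (1 - 2 * a) * (3 * a * (|P| + |Q|)) := by
      nlinarith [hd, mul_nonneg (mul_nonneg ha.le (by linarith : (0:ℝ) ≤ 1 - 3 * a))
        (add_nonneg (abs_nonneg P) (abs_nonneg Q))]
    exact le_of_mul_le_mul_left hmul h2a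
  have key : |P| + |Q| ≤ max (|P + Q|) (|P - Q|) := by
    rcases le_total 0 P with hp | hp <;> rcases le_total 0 Q with hq | hq
    · refine le_max_of_le_left ?_
      rw [abs_of_nonneg hp, abs_of_nonneg hq]
      exact le_abs_self _
    · refine le_max_of_le_right ?_
      rw [abs_of_nonneg hp, abs_of_nonpos hq]
      have := le_abs_self (P - Q); linarith
    · refine le_max_of_le_right ?_
      rw [abs_of_nonpos hp, abs_of_nonneg hq]
      have := neg_abs_le (P - Q); linarith
    · refine le_max_of_le_left ?_
      rw [abs_of_nonpos hp, abs_of_nonpos hq]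
      have := neg_abs_le (P + Q); linarith
  have hS : |P| + |Q| ≤ 3 * a * (|P| + |Q|) :=
    key.trans (max_le hsum hdiff3)
  have hpos : (0:ℝ) < 1 / 3 - a := by linarith
  have hS0 : |P| + |Q| ≤ 0 := by
    by_contra hcon
    push_neg at hcon
    have h3a : 3 * a < 1 := by linarith
    have := mul_lt_mul_of_pos_right h3a hcon
    rw [one_mul] at this
    linarith
  have hP0 : P = 0 := by
    have h1 := abs_nonneg P; have h2 := abs_nonneg Q
    have : |P| = 0 := by linarith
    exact abs_eq_zero.mp this
  have hQ0 : Q = 0 := by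
    have h1 := abs_nonneg P; have h2 := abs_nonneg Q
    have : |Q| = 0 := by linarith
    exact abs_eq_zero.mp this
  have h1 : p.1 = q.1 := by rw [hP] at hP0; linarith
  have h2 : p.2 = q.2 := by rw [hQ] at hQ0; linarith
  exact Prod.ext h1 h2
end

section
/- For 0 < a < 1/3, the fixed point (2π/3, 4π/3) of the map G(x,y) = (x + 2a sin x + a sin y + a sin(x−y), y + a sin x + 2a sin y + a sin(y−x)) is a hyperbolic sink: both eigenvalues of the Jacobian matrix of G at (2π/3, 4π/3) have absolute value strictly less than 1. -/
open Real

theorem stmt_6 (a : ℝ) (ha : 0 < a) (ha' : a < 1 / 3) :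
    ∀ μ ∈ spectrum ℂ
      ((Matrix.of ![![(1 + 2 * a * Real.cos (2 * π / 3) + a * Real.cos (2 * π / 3 - 4 * π / 3) : ℝ),
            a * Real.cos (4 * π / 3) - a * Real.cos (2 * π / 3 - 4 * π / 3)],
          ![a * Real.cos (2 * π / 3) - a * Real.cos (4 * π / 3 - 2 * π / 3),
            1 + 2 * a * Real.cos (4 * π / 3) + a * Real.cos (4 * π / 3 - 2 * π / 3)]]).map
        (Complex.ofReal)),
      ‖μ‖ < 1 := by
  have hc1 : Real.cos (2 * π / 3) = -(1/2) := by
    have : (2 : ℝ) * π / 3 = π - π / 3 := by ring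
    rw [this, Real.cos_pi_sub, Real.cos_pi_div_three]
  have hc2 : Real.cos (4 * π / 3) = -(1/2) := by
    have : (4 : ℝ) * π / 3 = π + π / 3 := by ring
    rw [this, Real.cos_add, Real.cos_pi, Real.sin_pi, Real.cos_pi_div_three]; ring
  have hc3 : Real.cos (2 * π / 3 - 4 * π / 3) = -(1/2) := by
    have : (2 : ℝ) * π / 3 - 4 * π / 3 = -(2 * π / 3) := by ring
    rw [this, Real.cos_neg, hc1]
  have hc4 : Real.cos (4 * π / 3 - 2 * π / 3) = -(1/2) := by
    have : (4 : ℝ) * π / 3 - 2 * π / 3 = 2 * π / 3 := by ring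
    rw [this, hc1]
  have hM : ((Matrix.of ![![(1 + 2 * a * Real.cos (2 * π / 3) + a * Real.cos (2 * π / 3 - 4 * π / 3) : ℝ),
            a * Real.cos (4 * π / 3) - a * Real.cos (2 * π / 3 - 4 * π / 3)],
          ![a * Real.cos (2 * π / 3) - a * Real.cos (4 * π / 3 - 2 * π / 3),
            1 + 2 * a * Real.cos (4 * π / 3) + a * Real.cos (4 * π / 3 - 2 * π / 3)]]).map
        (Complex.ofReal))
      = algebraMap ℂ (Matrix (Fin 2) (Fin 2) ℂ) ((1 - 3 * a / 2 : ℝ) : ℂ) := by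
    rw [Algebra.algebraMap_eq_smul_one]
    ext i j
    fin_cases i <;> fin_cases j <;>
      simp [hc1, hc2, hc3, hc4, Matrix.smul_apply, Matrix.one_apply] <;>
      push_cast <;> ring
  rw [hM, spectrum.scalar_eq]
  intro μ hμ
  simp only [Set.mem_singleton_iff] at hμ
  subst hμ
  rw [Complex.norm_real, Real.norm_eq_abs, abs_lt]
  constructor <;> nlinarith
end

section
/- Let ψ₃(x,y) = 2x − y + 3a sin x − 3a sin(y − x) with 0 < a < 1/3. Then ψ₃ vanishes identically on the segment {(x, 2x) : 2π/3 ≤ x ≤ π}, and ψ₃(x,y) ≤ 0 on the closed triangle T₁^I with vertices (0,2π), (2π/3, 4π/3), (π, 2π) (i.e. the set {(x,y) : 2π − x ≤ y ≤ 2π, y ≥ 2x}). -/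
open Real

theorem stmt_13 (a : ℝ) (ha : 0 < a) (ha' : a < 1 / 3) :
    (∀ x : ℝ, 2 * π / 3 ≤ x → x ≤ π →
      2 * x - 2 * x + 3 * a * Real.sin x - 3 * a * Real.sin (2 * x - x) = 0) ∧
    (∀ x y : ℝ, 2 * π - x ≤ y → y ≤ 2 * π → 2 * x ≤ y →
      2 * x - y + 3 * a * Real.sin x - 3 * a * Real.sin (y - x) ≤ 0) := by
  constructor
  · intro x _ _
    ring_nf
  · intro x y h1 h2 h3
    have hx0 : 0 ≤ x := by linarith
    set s : ℝ := (2 * x - y) / 2 with hs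
    have hs0 : s ≤ 0 := by simp [hs]; linarith
    have hspi : -π ≤ s := by
      have : -(2 * π) ≤ 2 * x - y := by linarith
      simp [hs]; linarith
    have hsin : Real.sin x - Real.sin (y - x) =
        2 * Real.sin s * Real.cos (y / 2) := by
      rw [Real.sin_sub_sin]
      ring_nf
      rw [hs]; ring_nf
    have hsinp : Real.sin s ≤ 0 := Real.sin_nonpos_of_nonpos_of_neg_pi_le hs0 hspi
    have hsge : s ≤ Real.sin s := by
      have := Real.sin_le (by linarith : (0:ℝ) ≤ -s)
      rw [Real.sin_neg] at this
      linarith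
    have hc1 : Real.cos (y / 2) ≤ 1 := Real.cos_le_one _
    have hc2 : -1 ≤ Real.cos (y / 2) := Real.neg_one_le_cos _
    have key : 2 * x - y + 3 * a * Real.sin x - 3 * a * Real.sin (y - x) =
        2 * s + 3 * a * (2 * Real.sin s * Real.cos (y / 2)) := by
      rw [← hsin]; simp [hs]; ring
    rw [key]
    nlinarith [mul_nonneg (le_of_lt ha) (neg_nonneg.mpr hsinp),
      mul_le_mul_of_nonneg_left hc2 (le_of_lt ha),
      mul_le_mul_of_nonpos_left hc2 hsinp,
      mul_le_mul_of_nonpos_left hc1 hsinp]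
end

section
/- Let ψ₃(x,y) = 2x − y + 3a sin x − 3a sin(y − x) with 0 < a < 1/3. Then ψ₃(x,y) ≥ 0 on the closed quadrilateral {(x,y) : x ≤ y ≤ 2π, 2π − x ≤ y, y ≤ 2x} (the region bounded by the lines y = 2x, y = 2π, y = x, and y = 2π − x, i.e. T₁^II ∪ T₁^III). -/
open Real

theorem stmt_14 (a : ℝ) (ha : 0 < a) (ha' : a < 1 / 3) :
    ∀ x y : ℝ, x ≤ y → y ≤ 2 * π → 2 * π - x ≤ y → y ≤ 2 * x →
      0 ≤ 2 * x - y + 3 * a * Real.sin x - 3 * a * Real.sin (y - x) := by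
  intro x y h1 h2 h3 h4
  have hpi := Real.pi_pos
  obtain ⟨t, ht⟩ : ∃ t, t = x - y / 2 := ⟨_, rfl⟩
  have ht0 : 0 ≤ t := by rw [ht]; linarith
  have htpi : t ≤ π := by rw [ht]; linarith
  have hkey : Real.sin x - Real.sin (y - x) = 2 * Real.sin (x - y / 2) * Real.cos (y / 2) := by
    rw [Real.sin_sub_sin]
    ring_nf
  rw [← ht] at hkey
  have hsin_nonneg : 0 ≤ Real.sin t := Real.sin_nonneg_of_nonneg_of_le_pi ht0 htpi
  have hsin_le : Real.sin t ≤ t := by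
    rcases eq_or_lt_of_le ht0 with h | h
    · simp [← h]
    · exact le_of_lt (Real.sin_lt h)
  have hcos : -1 ≤ Real.cos (y / 2) := Real.neg_one_le_cos _
  have hG : 2 * x - y + 3 * a * Real.sin x - 3 * a * Real.sin (y - x)
      = 2 * t + 6 * a * (Real.sin t * Real.cos (y / 2)) := by
    linear_combination 3 * a * hkey - 2 * ht
  rw [hG]
  nlinarith [ mul_nonneg (mul_nonneg (le_of_lt ha) hsin_nonneg) (by linarith : (0:ℝ) ≤ Real.cos (y/2) + 1),
    mul_nonneg (le_of_lt ha) (sub_nonneg.mpr hsin_le),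
    mul_nonneg ht0 (by linarith : (0:ℝ) ≤ 1 - 3 * a)]
end

section
/- Let ψ₄(x,y) = 2π + x − 2y − 3a sin y − 3a sin(y − x) with 0 < a < 1/3. Then ψ₄ vanishes identically on the line y = π + x/2, ψ₄(x,y) ≤ 0 on the closed region {(x,y) : y ≥ π + x/2, y ≤ 2π, y ≥ 2π − x}, and ψ₄(x,y) ≥ 0 on the closed triangle with vertices (2π/3, 4π/3), (π, π), (2π, 2π) where x ≤ y ≤ π + x/2 and y ≥ 2π − x. -/
open Real

lemma key_aux (a x y : ℝ) (ha : 0 < a) (ha' : a < 1 / 3) :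
    |3 * a * Real.sin y + 3 * a * Real.sin (y - x)| ≤ 2 * |y - (π + x / 2)| := by
  have hid : Real.sin y + Real.sin (y - x)
      = 2 * Real.sin (y - x / 2) * Real.cos (x / 2) := by
    have e1 := Real.sin_add (y - x / 2) (x / 2)
    have e2 := Real.sin_sub (y - x / 2) (x / 2)
    have a1 : (y - x / 2) + x / 2 = y := by ring
    have a2 : (y - x / 2) - x / 2 = y - x := by ring
    rw [a1] at e1; rw [a2] at e2; rw [e1, e2]; ring
  have hs : Real.sin (y - x / 2) = - Real.sin (y - (π + x / 2)) := by
    have h : y - x / 2 = (y - (π + x / 2)) + π := by ring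
    rw [h, Real.sin_add_pi]
  rw [hs] at hid
  have h3 : 3 * a * Real.sin y + 3 * a * Real.sin (y - x)
      = (6 * a) * (-(Real.sin (y - (π + x / 2))) * Real.cos (x / 2)) := by
    linear_combination 3 * a * hid
  calc |3 * a * Real.sin y + 3 * a * Real.sin (y - x)|
      = 6 * a * (|Real.sin (y - (π + x / 2))| * |Real.cos (x / 2)|) := by
        rw [h3, abs_mul, abs_mul, abs_mul, abs_neg]
        simp [abs_of_pos ha]
    _ ≤ 6 * a * (|y - (π + x / 2)| * 1) :=
        mul_le_mul_of_nonneg_left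
          (mul_le_mul Real.abs_sin_le_abs (Real.abs_cos_le_one _) (abs_nonneg _)
            (abs_nonneg _)) (by positivity)
    _ ≤ 2 * |y - (π + x / 2)| := by
        rw [mul_one]
        exact mul_le_mul_of_nonneg_right (by linarith) (abs_nonneg _)

theorem stmt_15 (a : ℝ) (ha : 0 < a) (ha' : a < 1 / 3) :
    (∀ x : ℝ,
      2 * π + x - 2 * (π + x / 2) - 3 * a * Real.sin (π + x / 2) -
        3 * a * Real.sin ((π + x / 2) - x) = 0) ∧
    (∀ x y : ℝ, π + x / 2 ≤ y → y ≤ 2 * π → 2 * π - x ≤ y →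
      2 * π + x - 2 * y - 3 * a * Real.sin y - 3 * a * Real.sin (y - x) ≤ 0) ∧
    (∀ x y : ℝ, x ≤ y → y ≤ π + x / 2 → 2 * π - x ≤ y →
      0 ≤ 2 * π + x - 2 * y - 3 * a * Real.sin y - 3 * a * Real.sin (y - x)) := by
  refine ⟨fun x => ?_, fun x y h1 h2 h3 => ?_, fun x y h1 h2 h3 => ?_⟩
  · have h : Real.sin (π + x / 2) = - Real.sin (x / 2) := by
      rw [add_comm, Real.sin_add_pi]
    have h2 : Real.sin ((π + x / 2) - x) = Real.sin (x / 2) := by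
      have : (π + x / 2) - x = π - x / 2 := by ring
      rw [this, Real.sin_pi_sub]
    rw [h, h2]; ring
  · have hk := key_aux a x y ha ha'
    have habs : |y - (π + x / 2)| = y - (π + x / 2) := abs_of_nonneg (by linarith)
    rw [habs] at hk
    have := neg_abs_le (3 * a * Real.sin y + 3 * a * Real.sin (y - x))
    linarith
  · have hk := key_aux a x y ha ha'
    have habs : |y - (π + x / 2)| = -(y - (π + x / 2)) := abs_of_nonpos (by linarith)
    rw [habs] at hk
    have := le_abs_self (3 * a * Real.sin y + 3 * a * Real.sin (y - x))
    linarith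
end

section
/- For 0 < a < 1/3, the orbital derivative of V(x,y) = |y − 2x| + |2π + x − 2y| along G, restricted to the triangle T₁^II = {(x,y) : π + x/2 ≤ y ≤ 2x, y ≤ 2π}, equals 3a sin x + 3a sin y, and this quantity is ≤ 0 on T₁^II, vanishing only at the vertices (2π/3, 4π/3), (π, 2π), and (2π, 2π). -/
open Real

/-- Lipschitz bound for sine. -/
lemma my_sin_lip (p q : ℝ) : |Real.sin p - Real.sin q| ≤ |p - q| := by
  have h1 := Real.abs_sin_le_abs (x := (p - q) / 2)
  have h2 := Real.abs_cos_le_one ((p + q) / 2)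
  have h3 : |(p - q) / 2| = |p - q| / 2 := by rw [abs_div]; norm_num
  rw [Real.sin_sub_sin, abs_mul, abs_mul, abs_two]
  rw [h3] at h1
  nlinarith [abs_nonneg (Real.sin ((p - q) / 2)), abs_nonneg (Real.cos ((p + q) / 2)),
    abs_nonneg (p - q)]

lemma my_sin_nonpos {t : ℝ} (h1 : π ≤ t) (h2 : t ≤ 2 * π) : Real.sin t ≤ 0 := by
  rw [← Real.sin_sub_two_pi]
  exact Real.sin_nonpos_of_nonpos_of_neg_pi_le (by linarith) (by linarith)

lemma my_sin_add_sin (x y : ℝ) :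
    Real.sin x + Real.sin y = 2 * Real.sin ((x + y) / 2) * Real.cos ((x - y) / 2) := by
  simpa [← sub_eq_add_neg] using Real.sin_sub_sin x (-y)

lemma my_sin_eq_zero {t : ℝ} (h1 : π ≤ t) (h2 : t ≤ 2 * π) (h : Real.sin t = 0) :
    t = π ∨ t = 2 * π := by
  by_contra hc
  push_neg at hc
  have ht1 : π < t := lt_of_le_of_ne h1 (Ne.symm hc.1)
  have ht2 : t < 2 * π := lt_of_le_of_ne h2 hc.2
  have hpos : 0 < Real.sin (t - π) :=
    Real.sin_pos_of_pos_of_lt_pi (by linarith) (by linarith)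
  have he : Real.sin t = -Real.sin (t - π) := by
    conv_lhs => rw [show t = (t - π) + π by ring]
    rw [Real.sin_add_pi]
  rw [h] at he
  linarith

theorem stmt_18 (a : ℝ) (ha : 0 < a) (ha' : a < 1 / 3) :
    ∀ x y : ℝ, π + x / 2 ≤ y → y ≤ 2 * x → y ≤ 2 * π →
      ((|(y + a * Real.sin x + 2 * a * Real.sin y + a * Real.sin (y - x)) -
            2 * (x + 2 * a * Real.sin x + a * Real.sin y + a * Real.sin (x - y))| +
          |2 * π + (x + 2 * a * Real.sin x + a * Real.sin y + a * Real.sin (x - y)) -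
            2 * (y + a * Real.sin x + 2 * a * Real.sin y + a * Real.sin (y - x))|) -
        (|y - 2 * x| + |2 * π + x - 2 * y|)
        = 3 * a * Real.sin x + 3 * a * Real.sin y) ∧
      3 * a * Real.sin x + 3 * a * Real.sin y ≤ 0 ∧
      (3 * a * Real.sin x + 3 * a * Real.sin y = 0 ↔
        (x, y) = (2 * π / 3, 4 * π / 3) ∨ (x, y) = (π, 2 * π) ∨ (x, y) = (2 * π, 2 * π)) := by
  intro x y hy1 hy2 hy3
  have hpi := Real.pi_pos
  have hx1 : 2 * π / 3 ≤ x := by linarith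
  have hx2 : x ≤ 2 * π := by linarith
  have hxy : x ≤ y := by linarith
  have hxy2 : y - x ≤ π := by rcases le_total x π with h | h <;> linarith
  have hs : Real.sin (x - y) = -Real.sin (y - x) := by
    rw [show x - y = -(y - x) by ring, Real.sin_neg]
  -- signs of the four arguments
  have lip1 := my_sin_lip (y - x) x
  have lip2 := my_sin_lip (x - y + 2 * π) y
  have hsa : Real.sin (x - y + 2 * π) = Real.sin (x - y) := Real.sin_add_two_pi _
  rw [hsa, abs_of_nonpos (show x - y + 2 * π - y ≤ 0 by linarith)] at lip2
  rw [abs_of_nonpos (show y - x - x ≤ 0 by linarith)] at lip1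
  have hb1 : a * (Real.sin (y - x) - Real.sin x) ≤ a * (2 * x - y) :=
    mul_le_mul_of_nonneg_left (by linarith [(abs_le.mp lip1).2]) ha.le
  have hb2 : a * (Real.sin (x - y) - Real.sin y) ≤ a * (2 * y - x - 2 * π) :=
    mul_le_mul_of_nonneg_left (by linarith [(abs_le.mp lip2).2]) ha.le
  have hm1 : 0 ≤ (1 - 3 * a) * (2 * x - y) :=
    mul_nonneg (by linarith) (by linarith)
  have hm2 : 0 ≤ (1 - 3 * a) * (2 * y - x - 2 * π) :=
    mul_nonneg (by linarith) (by linarith)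
  have h1 : (y + a * Real.sin x + 2 * a * Real.sin y + a * Real.sin (y - x)) -
      2 * (x + 2 * a * Real.sin x + a * Real.sin y + a * Real.sin (x - y)) ≤ 0 := by
    rw [hs]
    nlinarith [hb1, hm1, hs]
  have h2 : 2 * π + (x + 2 * a * Real.sin x + a * Real.sin y + a * Real.sin (x - y)) -
      2 * (y + a * Real.sin x + 2 * a * Real.sin y + a * Real.sin (y - x)) ≤ 0 := by
    rw [hs]
    nlinarith [hb2, hm2, hs]
  have h3 : y - 2 * x ≤ 0 := by linarith
  have h4 : 2 * π + x - 2 * y ≤ 0 := by linarith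
  refine ⟨?_, ?_, ?_⟩
  · rw [abs_of_nonpos h1, abs_of_nonpos h2, abs_of_nonpos h3, abs_of_nonpos h4]
    linear_combination a * hs
  · have key := my_sin_add_sin x y
    have hsnp : Real.sin ((x + y) / 2) ≤ 0 := my_sin_nonpos (by linarith) (by linarith)
    have hcnn : 0 ≤ Real.cos ((x - y) / 2) :=
      Real.cos_nonneg_of_mem_Icc ⟨by linarith, by linarith⟩
    have hsc : Real.sin ((x + y) / 2) * Real.cos ((x - y) / 2) ≤ 0 :=
      mul_nonpos_of_nonpos_of_nonneg hsnp hcnn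
    have h0 : Real.sin x + Real.sin y ≤ 0 := by linarith
    have := mul_le_mul_of_nonneg_left h0 ha.le
    nlinarith
  · constructor
    · intro heq
      have h0 : Real.sin x + Real.sin y = 0 := by
        rcases mul_eq_zero.mp (show (3 * a) * (Real.sin x + Real.sin y) = 0 by linarith) with h | h
        · linarith
        · exact h
      rw [my_sin_add_sin] at h0
      rcases mul_eq_zero.mp h0 with h | hc
      · rcases mul_eq_zero.mp h with h | h
        · norm_num at h
        · rcases my_sin_eq_zero (by linarith) (by linarith) h with h' | h'
          · left
            simp only [Prod.mk.injEq]
            constructor <;> linarith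
          · right; right
            simp only [Prod.mk.injEq]
            constructor <;> linarith
      · -- cos ((x-y)/2) = 0 with (x-y)/2 ∈ [-π/2, 0]
        have : x - y = -π := by
          by_contra hne
          have hlt : -(π / 2) < (x - y) / 2 := by
            rcases lt_or_eq_of_le (show -π ≤ x - y by linarith) with h' | h'
            · linarith
            · exact absurd h'.symm hne
          have := Real.cos_pos_of_mem_Ioo ⟨hlt, by linarith⟩
          linarith
        right; left
        simp only [Prod.mk.injEq]
        constructor <;> linarith
    · intro h
      rcases h with h | h | h <;>
        obtain ⟨hx, hy⟩ := Prod.mk.injEq .. |>.mp h <;> subst hx <;> subst hy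
      · have e1 : Real.sin (2 * π / 3) = Real.sin (π / 3) := by
          rw [show 2 * π / 3 = π - π / 3 by ring, Real.sin_pi_sub]
        have e2 : Real.sin (4 * π / 3) = -Real.sin (π / 3) := by
          rw [show 4 * π / 3 = π / 3 + π by ring, Real.sin_add_pi]
        rw [e1, e2]; ring
      · rw [Real.sin_pi, Real.sin_two_pi]; ring
      · rw [Real.sin_two_pi]; ring
end
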